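/- arXiv:1007.1679 — 2 statements merged into one kernel-verified Lean document; each statement's English description precedes it below -/
import Mathlib

section
/- Let a, b ∈ ℤ with b ≥ a + 1, n ≥ 1, H : ℝⁿ → ℝ be continuously differentiable with partial derivatives H'_1, …, H'_n, and for i = 1, …, n and each t ∈ ℤ with a + 1 ≤ t ≤ b let (y, v) ↦ f_i(t, y, v) be a continuously differentiable function from ℝ² to ℝ with partial derivatives f_{iy} and f_{iv}. Suppose x̃ : ℤ → ℝ satisfies x̃(a) = x_a (the value x(b) is not specified), and x̃ is a local extremizer of L[x] = H(F_1[x], …, F_n[x]): there exists δ > 0 such that L[x̃] ≤ L[x] for every x : ℤ → ℝ with x(a) = x_a and |x(t) − x̃(t)| < δ for all integers t with a ≤ t ≤ b (or L[x̃] ≥ L[x] for all such x). Then the natural boundary condition ∑_{i=1}^{n} H'_i(F_1[x̃], …, F_n[x̃]) · f_{iv}(b, x̃(b−1), ∇x̃(b)) = 0 holds. -/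
/-!
Perturb the extremizer only at the free endpoint: `x = x̃ + ε·δ_b` is admissible for every `ε`
(it keeps `x(a) = x_a` because `a ≠ b`) and stays `|ε|`-close to `x̃`. Since `t ↦ x(t-1)` and
`∇x(t)` involve `x(b)` only at `t = b`, each `F_i[x]` changes only through the last summand
`f_i(b, x̃(b-1), ∇x̃(b) + ε)`. Hence `ε ↦ L[x̃ + ε·δ_b]` has a local extremum at `0`, and its
derivative there, `∑ᵢ H'ᵢ(F[x̃]) · f_{iv}(b, x̃(b-1), ∇x̃(b))`, vanishes.
-/

open Topology

theorem LinearMap.apply_eq_sum_mul_single {ι R : Type*} [Fintype ι] [DecidableEq ι]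
    [CommSemiring R] (φ : (ι → R) →ₗ[R] R) (w : ι → R) :
    φ w = ∑ i, φ (Pi.single i 1) * w i := by
  conv_lhs => rw [← Finset.univ_sum_single w, map_sum]
  refine Finset.sum_congr rfl fun i _ => ?_
  rw [mul_comm, ← smul_eq_mul, ← map_smul, ← Pi.single_smul, smul_eq_mul, mul_one]

/-- The nabla integral `∫_a^b g(t, x(t-1), ∇x(t)) ∇t` on the time scale `ℤ`. -/
noncomputable def nablaSum (g : ℤ → ℝ → ℝ → ℝ) (a b : ℤ) (x : ℤ → ℝ) : ℝ :=
  ∑ t ∈ Finset.Icc (a + 1) b, g t (x (t - 1)) (x t - x (t - 1))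

section NablaSum

variable {a b : ℤ} (g : ℤ → ℝ → ℝ → ℝ) (x : ℤ → ℝ)

theorem nablaSum_add_single_right (hab : a + 1 ≤ b) (ε : ℝ) :
    nablaSum g a b (x + Pi.single b ε) =
      nablaSum g a (b - 1) x + g b (x (b - 1)) (x b - x (b - 1) + ε) := by
  rw [nablaSum, ← Finset.insert_Icc_sub_one_right_eq_Icc hab,
    Finset.sum_insert (by simp), add_comm]
  congr 1
  · refine Finset.sum_congr rfl fun t ht => ?_
    have htb : t < b := by linarith [(Finset.mem_Icc.1 ht).2]
    simp [htb.ne, show t - 1 ≠ b by omega]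
  · simp [show b - 1 ≠ b by omega, add_sub_right_comm]

theorem hasDerivAt_nablaSum_add_single_right (hab : a + 1 ≤ b) {g' : ℝ}
    (hg : HasDerivAt (fun v => g b (x (b - 1)) v) g' (x b - x (b - 1))) :
    HasDerivAt (fun ε => nablaSum g a b (x + Pi.single b ε)) g' 0 := by
  simp only [nablaSum_add_single_right g x hab]
  exact ((by simpa using hg : HasDerivAt _ g' (x b - x (b - 1) + 0)).comp_const_add _ _).const_add _

end NablaSum

theorem abs_single_apply_le {ι : Type*} [DecidableEq ι] {b t : ι} (ε : ℝ) :
    |(Pi.single b ε : ι → ℝ) t| ≤ |ε| := by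
  by_cases ht : t = b <;> simp [ht]

theorem isLocalExtr_add_single_of_fixed_left {a b : ℤ} (hab : a ≠ b) {xa : ℝ} {xE : ℤ → ℝ}
    (hxEa : xE a = xa) {L : (ℤ → ℝ) → ℝ}
    (hext :
      (∃ δ > 0, ∀ x : ℤ → ℝ, x a = xa →
        (∀ t : ℤ, a ≤ t → t ≤ b → |x t - xE t| < δ) → L xE ≤ L x) ∨
      (∃ δ > 0, ∀ x : ℤ → ℝ, x a = xa →
        (∀ t : ℤ, a ≤ t → t ≤ b → |x t - xE t| < δ) → L x ≤ L xE)) :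
    IsLocalExtr (fun ε => L (xE + Pi.single b ε)) 0 := by
  have hadm : ∀ ε : ℝ, (xE + Pi.single b ε : ℤ → ℝ) a = xa := fun ε => by simp [hab, hxEa]
  have hclose : ∀ δ > 0, ∀ᶠ ε in 𝓝 (0 : ℝ), ∀ t : ℤ, a ≤ t → t ≤ b →
      |(xE + Pi.single b ε : ℤ → ℝ) t - xE t| < δ := fun δ hδ => by
    filter_upwards [Metric.ball_mem_nhds (0 : ℝ) hδ] with ε hε t _ _
    rw [Metric.mem_ball, Real.dist_0_eq_abs] at hε
    simpa using (abs_single_apply_le ε).trans_lt hε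
  rcases hext with ⟨δ, hδ, hmin⟩ | ⟨δ, hδ, hmax⟩
  · refine Or.inl ?_
    filter_upwards [hclose δ hδ] with ε hε
    simpa using hmin _ (hadm ε) hε
  · refine Or.inr ?_
    filter_upwards [hclose δ hδ] with ε hε
    simpa using hmax _ (hadm ε) hε

theorem discrete_composite_natural_boundary_right_general
    (a b : ℤ) (hab : a + 1 ≤ b) (n : ℕ)
    (H : (Fin n → ℝ) → ℝ) (hH : ContDiff ℝ 1 H)
    (f fv : Fin n → ℤ → ℝ → ℝ → ℝ)
    (hfv : ∀ i : Fin n, ∀ t : ℤ, a + 1 ≤ t → t ≤ b → ∀ y v : ℝ,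
      HasDerivAt (fun v' => f i t y v') (fv i t y v) v)
    (xa : ℝ) (xE : ℤ → ℝ)
    (hxEa : xE a = xa)
    (F : (ℤ → ℝ) → Fin n → ℝ)
    (hF : ∀ x i, F x i = ∑ t ∈ Finset.Icc (a + 1) b, f i t (x (t - 1)) (x t - x (t - 1)))
    (L : (ℤ → ℝ) → ℝ)
    (hL : ∀ x, L x = H (F x))
    (hext :
      (∃ δ > 0, ∀ x : ℤ → ℝ, x a = xa →
        (∀ t : ℤ, a ≤ t → t ≤ b → |x t - xE t| < δ) → L xE ≤ L x) ∨
      (∃ δ > 0, ∀ x : ℤ → ℝ, x a = xa →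
        (∀ t : ℤ, a ≤ t → t ≤ b → |x t - xE t| < δ) → L x ≤ L xE)) :
    ∑ i, fderiv ℝ H (F xE) (Pi.single i 1) *
      fv i b (xE (b - 1)) (xE b - xE (b - 1)) = 0 := by
  set w : Fin n → ℝ := fun i => fv i b (xE (b - 1)) (xE b - xE (b - 1))
  have hF_curve : HasDerivAt (fun ε => F (xE + Pi.single b ε)) w 0 := by
    simp only [hasDerivAt_pi, hF]
    exact fun i => hasDerivAt_nablaSum_add_single_right _ xE hab (hfv i b hab le_rfl _ _)
  have hH_diff : HasFDerivAt H (fderiv ℝ H (F xE)) (F (xE + Pi.single b 0)) := by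
    simpa using (hH.differentiable one_ne_zero (F xE)).hasFDerivAt
  have hextr : IsLocalExtr (fun ε => H (F (xE + Pi.single b ε))) 0 := by
    simpa only [hL] using isLocalExtr_add_single_of_fixed_left (by omega) hxEa hext
  have hzero : fderiv ℝ H (F xE) w = 0 :=
    hextr.hasDerivAt_eq_zero (hH_diff.comp_hasDerivAt 0 hF_curve)
  rw [← hzero, ← ContinuousLinearMap.coe_coe, LinearMap.apply_eq_sum_mul_single]

/-- Natural boundary condition at `b` on the time scale ℤ for the composite
functional `L[x] = H(F₁[x], …, F_n[x])`, where
`F_i[x] = ∑_{t=a+1}^{b} f_i(t, x(t-1), ∇x(t))` with `∇x(t) = x(t) - x(t-1)`,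
when `x(a) = x_a` is fixed and `x(b)` is free. -/
theorem discrete_composite_natural_boundary_right
    (a b : ℤ) (hab : a + 1 ≤ b) (n : ℕ) (hn : 1 ≤ n)
    (H : (Fin n → ℝ) → ℝ) (hH : ContDiff ℝ 1 H)
    (f fy fv : Fin n → ℤ → ℝ → ℝ → ℝ)
    (hf : ∀ i : Fin n, ∀ t : ℤ, a + 1 ≤ t → t ≤ b →
      ContDiff ℝ 1 (fun p : ℝ × ℝ => f i t p.1 p.2))
    (hfy : ∀ i : Fin n, ∀ t : ℤ, a + 1 ≤ t → t ≤ b → ∀ y v : ℝ,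
      HasDerivAt (fun y' => f i t y' v) (fy i t y v) y)
    (hfv : ∀ i : Fin n, ∀ t : ℤ, a + 1 ≤ t → t ≤ b → ∀ y v : ℝ,
      HasDerivAt (fun v' => f i t y v') (fv i t y v) v)
    (xa : ℝ) (xE : ℤ → ℝ)
    (hxEa : xE a = xa)
    (F : (ℤ → ℝ) → Fin n → ℝ)
    (hF : ∀ x i, F x i = ∑ t ∈ Finset.Icc (a + 1) b, f i t (x (t - 1)) (x t - x (t - 1)))
    (L : (ℤ → ℝ) → ℝ)
    (hL : ∀ x, L x = H (F x))
    (hext :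
      (∃ δ > 0, ∀ x : ℤ → ℝ, x a = xa →
        (∀ t : ℤ, a ≤ t → t ≤ b → |x t - xE t| < δ) → L xE ≤ L x) ∨
      (∃ δ > 0, ∀ x : ℤ → ℝ, x a = xa →
        (∀ t : ℤ, a ≤ t → t ≤ b → |x t - xE t| < δ) → L x ≤ L xE)) :
    ∑ i, fderiv ℝ H (F xE) (Pi.single i 1) *
      fv i b (xE (b - 1)) (xE b - xE (b - 1)) = 0 :=
  discrete_composite_natural_boundary_right_general a b hab n H hH f fv hfv xa xE hxEa F hF L hL
    hext
end

section
/- There is no pair (Q₁, Q₂) ∈ ℝ² with Q₂ ≠ 0 satisfying the system 1 + Q₁²/(64 Q₂²) = Q₁ and 1/4 − Q₁/(32 Q₂) = Q₂. -/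
/-! In terms of `u = Q₁ / (8 Q₂)` the system reads `1 + u² = 8 Q₂ u` and `Q₂ = (1 - u) / 4`;
eliminating `Q₂` leaves `3u² - 2u + 1 = 0`, whose discriminant `4 - 12` is negative. -/

lemma three_mul_sq_sub_two_mul_add_one_pos (u : ℝ) : 0 < 3 * u ^ 2 - 2 * u + 1 := by
  nlinarith [sq_nonneg (3 * u - 1)]

/-- The system `1 + Q₁²/(64 Q₂²) = Q₁`, `1/4 - Q₁/(32 Q₂) = Q₂` has no real
solution with `Q₂ ≠ 0`. -/
theorem product_example_discrete_system_no_solution :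
    ¬ ∃ Q₁ Q₂ : ℝ, Q₂ ≠ 0 ∧
      1 + Q₁ ^ 2 / (64 * Q₂ ^ 2) = Q₁ ∧
      1 / 4 - Q₁ / (32 * Q₂) = Q₂ := by
  rintro ⟨Q₁, Q₂, hQ₂, h₁, h₂⟩
  set u := Q₁ / (8 * Q₂) with hu
  have hQ₁ : Q₁ = 8 * Q₂ * u := by rw [hu]; field_simp
  have hQ₂u : Q₂ = (1 - u) / 4 := by
    rw [← h₂, hu]; field_simp; ring
  have hsq : 1 + u ^ 2 = 8 * Q₂ * u := by
    rw [← hQ₁, ← h₁, hu]; field_simp; ring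
  have hquad : 3 * u ^ 2 - 2 * u + 1 = 0 := by
    rw [hQ₂u] at hsq; linarith
  exact (three_mul_sq_sub_two_mul_add_one_pos u).ne' hquad
end
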